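/- arXiv:1601.03059 — 10 statements merged into one kernel-verified Lean document; each statement's English description precedes it below -/
import Mathlib

section
/- In IEL⁻ extended with the axiom ¬K⊥, the axiom KA→¬¬A is derivable; conversely, in IEL⁻ extended with KA→¬¬A the formula ¬K⊥ is derivable. Hence over IEL⁻ the axioms ¬K⊥ and KA→¬¬A are equivalent. -/
/-- Formulas of intuitionistic epistemic logic. -/
inductive IForm : Type
  | atom : ℕ → IForm
  | bot  : IForm
  | and  : IForm → IForm → IForm
  | or   : IForm → IForm → IForm
  | imp  : IForm → IForm → IForm
  | K    : IForm → IForm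

def IForm.neg (A : IForm) : IForm := A.imp .bot

/-- Hilbert-style derivability for IEL⁻ together with an extra axiom set `Ax`. -/
inductive IELDeriv (Ax : IForm → Prop) : IForm → Prop
  | extra {A : IForm} : Ax A → IELDeriv Ax A
  | a1 (A B : IForm) : IELDeriv Ax (A.imp (B.imp A))
  | a2 (A B C : IForm) : IELDeriv Ax ((A.imp (B.imp C)).imp ((A.imp B).imp (A.imp C)))
  | andI (A B : IForm) : IELDeriv Ax (A.imp (B.imp (A.and B)))
  | andE1 (A B : IForm) : IELDeriv Ax ((A.and B).imp A)
  | andE2 (A B : IForm) : IELDeriv Ax ((A.and B).imp B)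
  | orI1 (A B : IForm) : IELDeriv Ax (A.imp (A.or B))
  | orI2 (A B : IForm) : IELDeriv Ax (B.imp (A.or B))
  | orE (A B C : IForm) : IELDeriv Ax ((A.imp C).imp ((B.imp C).imp ((A.or B).imp C)))
  | exfalso (A : IForm) : IELDeriv Ax (IForm.bot.imp A)
  | kdist (A B : IForm) : IELDeriv Ax ((IForm.K (A.imp B)).imp ((IForm.K A).imp (IForm.K B)))
  | coref (A : IForm) : IELDeriv Ax (A.imp (IForm.K A))
  | mp {A B : IForm} : IELDeriv Ax (A.imp B) → IELDeriv Ax A → IELDeriv Ax B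

/-- Derivability in IEL⁻. -/
def IELm : IForm → Prop := IELDeriv (fun _ => False)

/-- Derivability in IEL: IEL⁻ plus the axiom schema KA → ¬¬A. -/
def IEL : IForm → Prop :=
  IELDeriv (fun F => ∃ A : IForm, F = (IForm.K A).imp A.neg.neg)


namespace IELDeriv

variable {Ax : IForm → Prop}

lemma comp {A B C : IForm} (hAB : IELDeriv Ax (A.imp B))
    (hBC : IELDeriv Ax (B.imp C)) : IELDeriv Ax (A.imp C) :=
  mp (mp (a2 A B C) (mp (a1 (B.imp C) A) hBC)) hAB

lemma flip' {A B C : IForm} (h : IELDeriv Ax (A.imp (B.imp C))) :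
    IELDeriv Ax (B.imp (A.imp C)) :=
  comp (a1 B A) (mp (a2 A B C) h)

lemma comp2 {A B C D : IForm} (h : IELDeriv Ax (A.imp (B.imp C)))
    (hCD : IELDeriv Ax (C.imp D)) : IELDeriv Ax (A.imp (B.imp D)) :=
  comp h (mp (a2 B C D) (mp (a1 (C.imp D) B) hCD))

end IELDeriv

/-- Over IEL⁻ the axioms ¬K⊥ and KA → ¬¬A are equivalent:
IEL⁻ + ¬K⊥ derives every instance of KA → ¬¬A, and IEL⁻ + (KA → ¬¬A)
derives ¬K⊥. -/
theorem iel_truth_condition_equiv :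
    (∀ A : IForm,
      IELDeriv (fun F => F = (IForm.K IForm.bot).neg) ((IForm.K A).imp A.neg.neg)) ∧
    IELDeriv (fun F => ∃ A : IForm, F = (IForm.K A).imp A.neg.neg)
      (IForm.K IForm.bot).neg := by
  constructor
  · intro A
    -- ¬A → (KA → K⊥)
    have h1 : IELDeriv (fun F => F = (IForm.K IForm.bot).neg)
        (A.neg.imp ((IForm.K A).imp (IForm.K IForm.bot))) :=
      IELDeriv.comp (IELDeriv.coref A.neg) (IELDeriv.kdist A IForm.bot)
    have h2 := IELDeriv.flip' h1
    -- compose with ¬K⊥ : K⊥ → ⊥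
    exact IELDeriv.comp2 h2 (IELDeriv.extra rfl)
  · have hax : IELDeriv (fun F => ∃ A : IForm, F = (IForm.K A).imp A.neg.neg)
        ((IForm.K IForm.bot).imp IForm.bot.neg.neg) :=
      IELDeriv.extra ⟨IForm.bot, rfl⟩
    exact (IELDeriv.flip' hax).mp (IELDeriv.exfalso IForm.bot)
end

section
/- In IEL⁻ extended with the axiom KA→¬¬A, each of the formulas ¬(KA ∧ ¬A), ¬A→¬KA, and ¬¬(KA→A) is derivable, and conversely adding any one of these schemas to IEL⁻ makes KA→¬¬A derivable. -/
namespace IELAux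

def AxE (Ax : IForm → Prop) (B : IForm) : IForm → Prop := fun F => Ax F ∨ F = B

theorem mono {Ax Ax' : IForm → Prop} (h : ∀ F, Ax F → Ax' F) {A : IForm}
    (d : IELDeriv Ax A) : IELDeriv Ax' A := by
  induction d with
  | extra hA => exact .extra (h _ hA)
  | a1 A B => exact .a1 A B
  | a2 A B C => exact .a2 A B C
  | andI A B => exact .andI A B
  | andE1 A B => exact .andE1 A B
  | andE2 A B => exact .andE2 A B
  | orI1 A B => exact .orI1 A B
  | orI2 A B => exact .orI2 A B
  | orE A B C => exact .orE A B C
  | exfalso A => exact .exfalso A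
  | kdist A B => exact .kdist A B
  | coref A => exact .coref A
  | mp _ _ ih1 ih2 => exact .mp ih1 ih2

theorem selfImp {Ax : IForm → Prop} (A : IForm) : IELDeriv Ax (A.imp A) :=
  .mp (.mp (.a2 A (A.imp A) A) (.a1 A (A.imp A))) (.a1 A A)

theorem ded {Ax : IForm → Prop} {B A : IForm}
    (d : IELDeriv (AxE Ax B) A) : IELDeriv Ax (B.imp A) := by
  induction d with
  | @extra A hA =>
    rcases hA with h | h
    · exact .mp (.a1 A B) (.extra h)
    · subst h; exact selfImp _
  | mp _ _ ih1 ih2 => exact .mp (.mp (.a2 B _ _) ih1) ih2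
  | a1 A C => exact .mp (.a1 _ B) (.a1 A C)
  | a2 A C D => exact .mp (.a1 _ B) (.a2 A C D)
  | andI A C => exact .mp (.a1 _ B) (.andI A C)
  | andE1 A C => exact .mp (.a1 _ B) (.andE1 A C)
  | andE2 A C => exact .mp (.a1 _ B) (.andE2 A C)
  | orI1 A C => exact .mp (.a1 _ B) (.orI1 A C)
  | orI2 A C => exact .mp (.a1 _ B) (.orI2 A C)
  | orE A C D => exact .mp (.a1 _ B) (.orE A C D)
  | exfalso A => exact .mp (.a1 _ B) (.exfalso A)
  | kdist A C => exact .mp (.a1 _ B) (.kdist A C)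
  | coref A => exact .mp (.a1 _ B) (.coref A)

theorem hyp {Ax : IForm → Prop} (B : IForm) : IELDeriv (AxE Ax B) B :=
  .extra (Or.inr rfl)

theorem weak {Ax : IForm → Prop} {A : IForm} (B : IForm)
    (d : IELDeriv Ax A) : IELDeriv (AxE Ax B) A :=
  mono (fun _ h => Or.inl h) d

end IELAux

/-- Over IEL⁻, the schema KA → ¬¬A derives each of
¬(KA ∧ ¬A), ¬A → ¬KA and ¬¬(KA → A); and conversely adding any one of these
schemas to IEL⁻ makes KA → ¬¬A derivable. -/
theorem iel_factivity_forms :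
    let Fact : IForm → IForm := fun A => (IForm.K A).imp A.neg.neg
    let S1 : IForm → IForm := fun A => ((IForm.K A).and A.neg).neg
    let S2 : IForm → IForm := fun A => A.neg.imp (IForm.K A).neg
    let S3 : IForm → IForm := fun A => ((IForm.K A).imp A).neg.neg
    let FactAx : IForm → Prop := fun F => ∃ A, F = Fact A
    let S1Ax : IForm → Prop := fun F => ∃ A, F = S1 A
    let S2Ax : IForm → Prop := fun F => ∃ A, F = S2 A
    let S3Ax : IForm → Prop := fun F => ∃ A, F = S3 A
    (∀ A : IForm, IELDeriv FactAx (S1 A)) ∧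
    (∀ A : IForm, IELDeriv FactAx (S2 A)) ∧
    (∀ A : IForm, IELDeriv FactAx (S3 A)) ∧
    (∀ A : IForm, IELDeriv S1Ax (Fact A)) ∧
    (∀ A : IForm, IELDeriv S2Ax (Fact A)) ∧
    (∀ A : IForm, IELDeriv S3Ax (Fact A)) := by
  open IELAux in
  refine ⟨?_, ?_, ?_, ?_, ?_, ?_⟩ <;> intro A
  -- Fact ⊢ S1
  · apply ded
    have h := hyp (Ax := fun F => ∃ A, F = (IForm.K A).imp A.neg.neg)
      ((IForm.K A).and A.neg)
    have kA := IELDeriv.mp (.andE1 _ _) h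
    have nA := IELDeriv.mp (.andE2 _ _) h
    have fact0 : IELDeriv (fun F => ∃ A, F = (IForm.K A).imp A.neg.neg)
        ((IForm.K A).imp A.neg.neg) := .extra ⟨A, rfl⟩
    exact .mp (.mp (weak _ fact0) kA) nA
  -- Fact ⊢ S2
  · apply ded; apply ded
    have kA := hyp (Ax := AxE (fun F => ∃ A, F = (IForm.K A).imp A.neg.neg) A.neg)
      (IForm.K A)
    have nA := weak (IForm.K A)
      (hyp (Ax := fun F => ∃ A, F = (IForm.K A).imp A.neg.neg) A.neg)
    have fact0 : IELDeriv (fun F => ∃ A, F = (IForm.K A).imp A.neg.neg)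
        ((IForm.K A).imp A.neg.neg) := .extra ⟨A, rfl⟩
    exact .mp (.mp (weak _ (weak _ fact0)) kA) nA
  -- Fact ⊢ S3
  · apply ded
    have h := hyp (Ax := fun F => ∃ A, F = (IForm.K A).imp A.neg.neg)
      ((IForm.K A).imp A).neg
    -- ¬A
    have nA : IELDeriv (AxE (fun F => ∃ A, F = (IForm.K A).imp A.neg.neg) ((IForm.K A).imp A).neg) A.neg := by
      apply ded
      have hA := hyp (Ax := AxE (fun F => ∃ A, F = (IForm.K A).imp A.neg.neg)
        ((IForm.K A).imp A).neg) A
      exact .mp (weak _ h) (.mp (.a1 A (IForm.K A)) hA)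
    -- ¬KA via Fact
    have fact0 : IELDeriv (fun F => ∃ A, F = (IForm.K A).imp A.neg.neg)
        ((IForm.K A).imp A.neg.neg) := .extra ⟨A, rfl⟩
    have fact : IELDeriv (AxE (fun F => ∃ A, F = (IForm.K A).imp A.neg.neg) ((IForm.K A).imp A).neg) ((IForm.K A).imp A.neg.neg) := weak _ fact0
    have nKA : IELDeriv (AxE (fun F => ∃ A, F = (IForm.K A).imp A.neg.neg) ((IForm.K A).imp A).neg) (IForm.K A).neg := by
      apply ded
      have kA := hyp (Ax := AxE (fun F => ∃ A, F = (IForm.K A).imp A.neg.neg)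
        ((IForm.K A).imp A).neg) (IForm.K A)
      exact .mp (.mp (weak _ fact) kA) (weak _ nA)
    -- KA → A
    have kaA : IELDeriv (AxE (fun F => ∃ A, F = (IForm.K A).imp A.neg.neg) ((IForm.K A).imp A).neg) ((IForm.K A).imp A) := by
      apply ded
      have kA := hyp (Ax := AxE (fun F => ∃ A, F = (IForm.K A).imp A.neg.neg)
        ((IForm.K A).imp A).neg) (IForm.K A)
      exact .mp (.exfalso A) (.mp (weak _ nKA) kA)
    exact .mp h kaA
  -- S1 ⊢ Fact
  · apply ded; apply ded
    have kA := weak A.neg (hyp (Ax := fun F => ∃ A, F = ((IForm.K A).and A.neg).neg)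
      (IForm.K A))
    have nA := hyp (Ax := AxE (fun F => ∃ A, F = ((IForm.K A).and A.neg).neg)
      (IForm.K A)) A.neg
    have s1a : IELDeriv (fun F => ∃ A, F = ((IForm.K A).and A.neg).neg)
        ((IForm.K A).and A.neg).neg := .extra ⟨A, rfl⟩
    have s1 : IELDeriv (AxE (AxE (fun F => ∃ A, F = ((IForm.K A).and A.neg).neg) (IForm.K A)) A.neg) ((IForm.K A).and A.neg).neg := weak _ (weak _ s1a)
    exact .mp s1 (.mp (.mp (.andI _ _) kA) nA)
  -- S2 ⊢ Fact
  · apply ded; apply ded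
    have kA := weak A.neg (hyp (Ax := fun F => ∃ A : IForm, F = A.neg.imp (IForm.K A).neg)
      (IForm.K A))
    have nA := hyp (Ax := AxE (fun F => ∃ A : IForm, F = A.neg.imp (IForm.K A).neg)
      (IForm.K A)) A.neg
    have s2a : IELDeriv (fun F => ∃ A : IForm, F = A.neg.imp (IForm.K A).neg)
        (A.neg.imp (IForm.K A).neg) := .extra ⟨A, rfl⟩
    have s2 : IELDeriv (AxE (AxE (fun F => ∃ A : IForm, F = A.neg.imp (IForm.K A).neg) (IForm.K A)) A.neg) (A.neg.imp (IForm.K A).neg) := weak _ (weak _ s2a)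
    exact .mp (.mp s2 nA) kA
  -- S3 ⊢ Fact
  · apply ded; apply ded
    have kA := weak A.neg (hyp (Ax := fun F => ∃ A, F = ((IForm.K A).imp A).neg.neg)
      (IForm.K A))
    have nA := hyp (Ax := AxE (fun F => ∃ A, F = ((IForm.K A).imp A).neg.neg)
      (IForm.K A)) A.neg
    have s3a : IELDeriv (fun F => ∃ A, F = ((IForm.K A).imp A).neg.neg)
        ((IForm.K A).imp A).neg.neg := .extra ⟨A, rfl⟩
    have s3 : IELDeriv (AxE (AxE (fun F => ∃ A, F = ((IForm.K A).imp A).neg.neg) (IForm.K A)) A.neg) ((IForm.K A).imp A).neg.neg := weak _ (weak _ s3a)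
    have p : IELDeriv (AxE (AxE (fun F => ∃ A, F = ((IForm.K A).imp A).neg.neg) (IForm.K A)) A.neg) ((IForm.K A).imp A).neg := by
      apply ded
      have g := hyp (Ax := AxE (AxE (fun F => ∃ A, F = ((IForm.K A).imp A).neg.neg)
        (IForm.K A)) A.neg) ((IForm.K A).imp A)
      exact .mp (weak _ nA) (.mp g (weak _ kA))
    exact .mp s3 p
end

section
/- The Gödel translation tr (boxing every subformula) embeds IEL⁻ into S4V⁻ soundly: if IEL⁻ ⊢ F then S4V⁻ ⊢ tr(F). -/
/-- Formulas of classical bimodal logic with □ (provability) and V (verification). -/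
inductive MForm : Type
  | atom : ℕ → MForm
  | bot  : MForm
  | and  : MForm → MForm → MForm
  | or   : MForm → MForm → MForm
  | imp  : MForm → MForm → MForm
  | box  : MForm → MForm
  | V    : MForm → MForm

def MForm.neg (A : MForm) : MForm := A.imp .bot

/-- Hilbert-style derivability for S4V⁻ (`strong = false`) and S4V (`strong = true`,
adding the axiom ¬□V⊥). -/
inductive S4VDeriv (strong : Bool) : MForm → Prop
  | a1 (A B : MForm) : S4VDeriv strong (A.imp (B.imp A))
  | a2 (A B C : MForm) : S4VDeriv strong ((A.imp (B.imp C)).imp ((A.imp B).imp (A.imp C)))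
  | andI (A B : MForm) : S4VDeriv strong (A.imp (B.imp (A.and B)))
  | andE1 (A B : MForm) : S4VDeriv strong ((A.and B).imp A)
  | andE2 (A B : MForm) : S4VDeriv strong ((A.and B).imp B)
  | orI1 (A B : MForm) : S4VDeriv strong (A.imp (A.or B))
  | orI2 (A B : MForm) : S4VDeriv strong (B.imp (A.or B))
  | orE (A B C : MForm) : S4VDeriv strong ((A.imp C).imp ((B.imp C).imp ((A.or B).imp C)))
  | exfalso (A : MForm) : S4VDeriv strong (MForm.bot.imp A)
  | dne (A : MForm) : S4VDeriv strong (A.neg.neg.imp A)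
  | boxK (A B : MForm) : S4VDeriv strong ((A.imp B).box.imp (A.box.imp B.box))
  | boxT (A : MForm) : S4VDeriv strong (A.box.imp A)
  | box4 (A : MForm) : S4VDeriv strong (A.box.imp A.box.box)
  | vK (A B : MForm) : S4VDeriv strong ((MForm.V (A.imp B)).imp ((MForm.V A).imp (MForm.V B)))
  | boxV (A : MForm) : S4VDeriv strong (A.box.imp (MForm.V A))
  | consis : strong = true → S4VDeriv strong ((MForm.V MForm.bot).box.neg)
  | mp {A B : MForm} : S4VDeriv strong (A.imp B) → S4VDeriv strong A → S4VDeriv strong B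
  | nec {A : MForm} : S4VDeriv strong A → S4VDeriv strong A.box

/-- The Gödel translation, boxing every subformula and sending K to V. -/
def IForm.tr : IForm → MForm
  | .atom n => (MForm.atom n).box
  | .bot => MForm.bot.box
  | .and A B => (A.tr.and B.tr).box
  | .or A B => (A.tr.or B.tr).box
  | .imp A B => (A.tr.imp B.tr).box
  | .K A => (MForm.V A.tr).box


namespace GodelEmb

open MForm S4VDeriv

abbrev P (A : MForm) : Prop := S4VDeriv false A

lemma constL {A B : MForm} (h : P B) : P (A.imp B) :=
  mp (a1 B A) h

lemma compR {A B C : MForm} (h : P (B.imp C)) : P ((A.imp B).imp (A.imp C)) :=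
  mp (a2 A B C) (constL h)

lemma compL {A B C : MForm} (h1 : P (A.imp B)) (h2 : P (B.imp C)) : P (A.imp C) :=
  mp (compR h2) h1

lemma mp2 {A B C : MForm} (h1 : P (A.imp (B.imp C))) (h2 : P (A.imp B)) : P (A.imp C) :=
  mp (mp (a2 A B C) h1) h2

lemma comp2 {A B C D : MForm} (h1 : P (A.imp (B.imp C))) (h2 : P (C.imp D)) :
    P (A.imp (B.imp D)) :=
  compL h1 (compR h2)

lemma boxMono {A B : MForm} (h : P (A.imp B)) : P (A.box.imp B.box) :=
  mp (boxK A B) (nec h)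

/-- Self-boxing formulas. -/
def SB (A : MForm) : Prop := P (A.imp A.box)

lemma liftB {A X : MForm} (sb : SB A) (h : P (A.imp X)) : P (A.imp X.box) :=
  compL sb (boxMono h)

lemma uncurry2 {A B X : MForm} (h : P (A.imp (B.imp X))) : P ((A.and B).imp X) :=
  mp2 (compL (andE1 A B) h) (andE2 A B)

lemma curry2 {A B X : MForm} (h : P ((A.and B).imp X)) : P (A.imp (B.imp X)) :=
  comp2 (andI A B) h

lemma boxPair (A B : MForm) : P (A.box.imp (B.box.imp (A.and B).box)) :=
  compL (boxMono (andI A B)) (boxK B (A.and B))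

lemma sbAnd {A B : MForm} (sa : SB A) (sb : SB B) : SB (A.and B) :=
  mp2 (compL (compL (andE1 A B) sa) (boxPair A B)) (compL (andE2 A B) sb)

lemma lift2 {A B X : MForm} (sa : SB A) (sb : SB B) (h : P (A.imp (B.imp X))) :
    P (A.imp (B.imp X.box)) :=
  curry2 (liftB (sbAnd sa sb) (uncurry2 h))

lemma vMono {A B : MForm} (h : P (A.imp B)) : P ((MForm.V A).imp (MForm.V B)) :=
  mp (vK A B) (mp (boxV (A.imp B)) (nec h))

lemma sb_tr (F : IForm) : SB F.tr := by
  cases F <;> exact box4 _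

end GodelEmb

/-- The Gödel translation soundly embeds IEL⁻ into S4V⁻:
if IEL⁻ ⊢ F then S4V⁻ ⊢ tr(F). -/
theorem godel_embedding_iel_minus (F : IForm) (h : IELm F) : S4VDeriv false F.tr := by
  open GodelEmb S4VDeriv in
  induction h with
  | extra hax => exact absurd hax (fun h => h)
  | a1 A B =>
      simp only [IForm.tr]
      exact nec (liftB (sb_tr A) (S4VDeriv.a1 A.tr B.tr))
  | a2 A B C =>
      simp only [IForm.tr]
      set a := A.tr; set b := B.tr; set c := C.tr
      set p : MForm := (a.imp (b.imp c).box).box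
      set q : MForm := (a.imp b).box
      have sp : SB p := box4 _
      have sq : SB q := box4 _
      have sa : SB a := sb_tr A
      set H : MForm := (p.and q).and a
      have hp : P (H.imp p) := compL (andE1 _ _) (andE1 _ _)
      have hq : P (H.imp q) := compL (andE1 _ _) (andE2 _ _)
      have ha : P (H.imp a) := andE2 _ _
      have h1 : P (H.imp (a.imp (b.imp c).box)) := compL hp (boxT _)
      have h2 : P (H.imp (b.imp c)) := compL (mp2 h1 ha) (boxT _)
      have h3 : P (H.imp b) := mp2 (compL hq (boxT _)) ha
      have h6 : P (H.imp c) := mp2 h2 h3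
      have h7 : P (p.imp (q.imp (a.imp c))) := curry2 (curry2 h6)
      exact nec (liftB sp (lift2 sp sq h7))
  | andI A B =>
      simp only [IForm.tr]
      exact nec (liftB (sb_tr A) (lift2 (sb_tr A) (sb_tr B) (S4VDeriv.andI A.tr B.tr)))
  | andE1 A B =>
      simp only [IForm.tr]
      exact nec (compL (boxT _) (S4VDeriv.andE1 A.tr B.tr))
  | andE2 A B =>
      simp only [IForm.tr]
      exact nec (compL (boxT _) (S4VDeriv.andE2 A.tr B.tr))
  | orI1 A B =>
      simp only [IForm.tr]
      exact nec (liftB (sb_tr A) (S4VDeriv.orI1 A.tr B.tr))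
  | orI2 A B =>
      simp only [IForm.tr]
      exact nec (liftB (sb_tr B) (S4VDeriv.orI2 A.tr B.tr))
  | orE A B C =>
      simp only [IForm.tr]
      set a := A.tr; set b := B.tr; set c := C.tr
      set p : MForm := (a.imp c).box
      set q : MForm := (b.imp c).box
      set r : MForm := (a.or b).box
      have sp : SB p := box4 _
      have sq : SB q := box4 _
      have sr : SB r := box4 _
      set H : MForm := (p.and q).and r
      have hp : P (H.imp (a.imp c)) :=
        compL (compL (andE1 _ _) (andE1 _ _)) (boxT _)
      have hq : P (H.imp (b.imp c)) :=
        compL (compL (andE1 _ _) (andE2 _ _)) (boxT _)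
      have hr : P (H.imp (a.or b)) := compL (andE2 _ _) (boxT _)
      have h1 : P (H.imp ((b.imp c).imp ((a.or b).imp c))) :=
        compL hp (S4VDeriv.orE a b c)
      have h2 : P (H.imp c) := mp2 (mp2 h1 hq) hr
      have h3 : P (p.imp (q.imp (r.imp c))) := curry2 (curry2 h2)
      exact nec (liftB sp (lift2 sp sq h3))
  | exfalso A =>
      simp only [IForm.tr]
      exact nec (compL (boxT _) (S4VDeriv.exfalso A.tr))
  | kdist A B =>
      simp only [IForm.tr]
      set a := A.tr; set b := B.tr
      set p : MForm := (MForm.V (a.imp b).box).box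
      set q : MForm := (MForm.V a).box
      have sp : SB p := box4 _
      have sq : SB q := box4 _
      set H : MForm := p.and q
      have hp : P (H.imp (MForm.V (a.imp b))) :=
        compL (compL (andE1 _ _) (boxT _)) (vMono (boxT _))
      have hq : P (H.imp (MForm.V a)) := compL (andE2 _ _) (boxT _)
      have h1 : P (H.imp (MForm.V b)) := mp2 (compL hp (vK a b)) hq
      have h2 : P (p.imp (q.imp (MForm.V b))) := curry2 h1
      exact nec (liftB sp (lift2 sp sq h2))
  | coref A =>
      simp only [IForm.tr]
      exact nec (liftB (sb_tr A) (compL (sb_tr A) (boxV A.tr)))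
  | mp _ _ ih1 ih2 =>
      simp only [IForm.tr] at ih1
      exact S4VDeriv.mp (S4VDeriv.mp (boxT _) ih1) ih2
end

section
/- The logic LPV⁻ admits internalization: if A₁,…,Aₙ, y₁:B₁,…,yₘ:Bₘ ⊢ F in LPV⁻, then there is a proof term p(x₁,…,xₙ,y₁,…,yₘ) such that x₁:A₁,…,xₙ:Aₙ, y₁:B₁,…,yₘ:Bₘ ⊢ p(x₁,…,xₙ,y₁,…,yₘ):F. -/
/-- Proof terms of the logic of proofs. -/
inductive Tm : Type
  | var   : ℕ → Tm
  | const : ℕ → Tm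
  | app   : Tm → Tm → Tm
  | sum   : Tm → Tm → Tm
  | bang  : Tm → Tm

/-- A ground term contains no proof variables. -/
def Tm.ground : Tm → Prop
  | .var _ => False
  | .const _ => True
  | .app t s => t.ground ∧ s.ground
  | .sum t s => t.ground ∧ s.ground
  | .bang t => t.ground

/-- Proof variables occurring in a term. -/
def Tm.vars : Tm → List ℕ
  | .var x => [x]
  | .const _ => []
  | .app t s => t.vars ++ s.vars
  | .sum t s => t.vars ++ s.vars
  | .bang t => t.vars

/-- Formulas of the logics LPV⁻ / LPV of explicit proofs and verification. -/
inductive LForm : Type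
  | atom : ℕ → LForm
  | bot  : LForm
  | and  : LForm → LForm → LForm
  | or   : LForm → LForm → LForm
  | imp  : LForm → LForm → LForm
  | V    : LForm → LForm
  | pf   : Tm → LForm → LForm

def LForm.neg (A : LForm) : LForm := A.imp .bot

/-- Proof variables occurring in a formula. -/
def LForm.vars : LForm → List ℕ
  | .atom _ => []
  | .bot => []
  | .and A B => A.vars ++ B.vars
  | .or A B => A.vars ++ B.vars
  | .imp A B => A.vars ++ B.vars
  | .V A => A.vars
  | .pf t A => t.vars ++ A.vars

/-- Axioms of LPV⁻ (`strong = false`) and LPV (`strong = true`, adding ¬t:V⊥). -/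
inductive LAxiom (strong : Bool) : LForm → Prop
  | a1 (A B : LForm) : LAxiom strong (A.imp (B.imp A))
  | a2 (A B C : LForm) : LAxiom strong ((A.imp (B.imp C)).imp ((A.imp B).imp (A.imp C)))
  | andI (A B : LForm) : LAxiom strong (A.imp (B.imp (A.and B)))
  | andE1 (A B : LForm) : LAxiom strong ((A.and B).imp A)
  | andE2 (A B : LForm) : LAxiom strong ((A.and B).imp B)
  | orI1 (A B : LForm) : LAxiom strong (A.imp (A.or B))
  | orI2 (A B : LForm) : LAxiom strong (B.imp (A.or B))
  | orE (A B C : LForm) : LAxiom strong ((A.imp C).imp ((B.imp C).imp ((A.or B).imp C)))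
  | exfalso (A : LForm) : LAxiom strong (LForm.bot.imp A)
  | dne (A : LForm) : LAxiom strong (A.neg.neg.imp A)
  | appAx (t s : Tm) (A B : LForm) :
      LAxiom strong ((LForm.pf t (A.imp B)).imp ((LForm.pf s A).imp (LForm.pf (t.app s) B)))
  | reflAx (t : Tm) (A : LForm) : LAxiom strong ((LForm.pf t A).imp A)
  | checkAx (t : Tm) (A : LForm) :
      LAxiom strong ((LForm.pf t A).imp (LForm.pf t.bang (LForm.pf t A)))
  | sum1 (t s : Tm) (A : LForm) : LAxiom strong ((LForm.pf t A).imp (LForm.pf (s.sum t) A))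
  | sum2 (t s : Tm) (A : LForm) : LAxiom strong ((LForm.pf t A).imp (LForm.pf (t.sum s) A))
  | vK (A B : LForm) : LAxiom strong ((LForm.V (A.imp B)).imp ((LForm.V A).imp (LForm.V B)))
  | pfV (t : Tm) (A : LForm) : LAxiom strong ((LForm.pf t A).imp (LForm.V A))
  | consis (t : Tm) : strong = true → LAxiom strong (LForm.pf t (LForm.V LForm.bot)).neg

/-- Hilbert-style derivability for LPV⁻ / LPV from a list of hypotheses, with
modus ponens and axiom necessitation. -/
inductive LDerivCtx (strong : Bool) (Γ : List LForm) : LForm → Prop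
  | hyp {A : LForm} : A ∈ Γ → LDerivCtx strong Γ A
  | ax {A : LForm} : LAxiom strong A → LDerivCtx strong Γ A
  | mp {A B : LForm} : LDerivCtx strong Γ (A.imp B) → LDerivCtx strong Γ A → LDerivCtx strong Γ B
  | nec {A : LForm} (c : ℕ) : LAxiom strong A → LDerivCtx strong Γ (LForm.pf (Tm.const c) A)

/-- Derivability in LPV⁻ / LPV (no hypotheses). -/
def LDeriv (strong : Bool) (A : LForm) : Prop := LDerivCtx strong [] A

/-!
Induction on the derivation. A hypothesis `Aᵢ` is witnessed by `xᵢ`, a hypothesis `yⱼ:Bⱼ` by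
`!yⱼ`, an axiom by a constant `c`, a necessitated axiom `c:A` by `!c`, and modus ponens by
application `t·s`; none of these introduces variables other than the `xᵢ` and `yⱼ`.
-/

theorem List.exists_mem_zip_of_mem_right {α β : Type*} {l₁ : List α} {l₂ : List β}
    (hlen : l₂.length ≤ l₁.length) {b : β} (hb : b ∈ l₂) : ∃ a, (a, b) ∈ l₁.zip l₂ := by
  rw [← List.map_snd_zip hlen] at hb
  obtain ⟨⟨a, _⟩, hab, rfl⟩ := List.mem_map.1 hb
  exact ⟨a, hab⟩

def LForm.Internalized (strong : Bool) (Δ : List LForm) (S : Set ℕ) (F : LForm) : Prop :=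
  ∃ p : Tm, (∀ v ∈ p.vars, v ∈ S) ∧ LDerivCtx strong Δ (.pf p F)

namespace LForm.Internalized

variable {strong : Bool} {Δ : List LForm} {S : Set ℕ}

theorem of_lAxiom {A : LForm} (hA : LAxiom strong A) : A.Internalized strong Δ S :=
  ⟨.const 0, by simp [Tm.vars], .nec 0 hA⟩

theorem of_var_mem {x : ℕ} {A : LForm} (hx : x ∈ S) (hxA : LForm.pf (.var x) A ∈ Δ) :
    A.Internalized strong Δ S :=
  ⟨.var x, by simpa [Tm.vars], .hyp hxA⟩

theorem pf {t : Tm} {A : LForm} (ht : ∀ v ∈ t.vars, v ∈ S) (h : LDerivCtx strong Δ (.pf t A)) :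
    (LForm.pf t A).Internalized strong Δ S :=
  ⟨t.bang, by simpa [Tm.vars], .mp (.ax (.checkAx t A)) h⟩

theorem mp {A B : LForm} :
    (A.imp B).Internalized strong Δ S → A.Internalized strong Δ S → B.Internalized strong Δ S
  | ⟨t, ht, hAB⟩, ⟨s, hs, hA⟩ =>
    ⟨t.app s, by simpa [Tm.vars, or_imp, forall_and] using And.intro ht hs,
      .mp (.mp (.ax (.appAx t s A B)) hAB) hA⟩

end LForm.Internalized

theorem LDerivCtx.internalized {strong : Bool} {Γ Δ : List LForm} {S : Set ℕ} {F : LForm}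
    (hΓ : ∀ G ∈ Γ, G.Internalized strong Δ S) (h : LDerivCtx strong Γ F) :
    F.Internalized strong Δ S := by
  induction h with
  | hyp hG => exact hΓ _ hG
  | ax hA => exact .of_lAxiom hA
  | mp _ _ ihAB ihA => exact ihAB.mp ihA
  | nec c hA => exact .pf (by simp [Tm.vars]) (.nec c hA)

theorem lpv_minus_internalization_general (A : List LForm) (B : List (ℕ × LForm)) (F : LForm)
    (h : LDerivCtx false (A ++ B.map (fun yb => LForm.pf (Tm.var yb.1) yb.2)) F)
    (xs : List ℕ) (hlen : xs.length = A.length) :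
    ∃ p : Tm, (∀ v ∈ p.vars, v ∈ xs ∨ v ∈ B.map Prod.fst) ∧
      LDerivCtx false
        ((xs.zip A).map (fun xA => LForm.pf (Tm.var xA.1) xA.2) ++
          B.map (fun yb => LForm.pf (Tm.var yb.1) yb.2))
        (LForm.pf p F) := by
  refine h.internalized (S := {v | v ∈ xs ∨ v ∈ B.map Prod.fst}) fun G hG => ?_
  rcases List.mem_append.1 hG with hGA | hGB
  · obtain ⟨x, hxG⟩ := List.exists_mem_zip_of_mem_right hlen.ge hGA
    exact .of_var_mem (Or.inl (List.of_mem_zip hxG).1)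
      (List.mem_append_left _ (List.mem_map_of_mem hxG))
  · obtain ⟨⟨y, C⟩, hyC, rfl⟩ := List.mem_map.1 hGB
    exact .pf (by simpa [Tm.vars] using Or.inr ⟨C, hyC⟩)
      (.hyp (List.mem_append_right _ hGB))

/-- LPV⁻ admits internalization: if A₁,…,Aₙ, y₁:B₁,…,yₘ:Bₘ ⊢ F,
then for fresh distinct proof variables x₁,…,xₙ there is a proof term p (whose
variables are among the xᵢ and yⱼ) with x₁:A₁,…,xₙ:Aₙ, y₁:B₁,…,yₘ:Bₘ ⊢ p:F. -/
theorem lpv_minus_internalization (A : List LForm) (B : List (ℕ × LForm)) (F : LForm)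
    (h : LDerivCtx false (A ++ B.map (fun yb => LForm.pf (Tm.var yb.1) yb.2)) F)
    (xs : List ℕ) (hlen : xs.length = A.length) (hnodup : xs.Nodup)
    (hfresh : ∀ x ∈ xs,
      (∀ C ∈ A, x ∉ C.vars) ∧ (∀ yb ∈ B, x ≠ yb.1 ∧ x ∉ yb.2.vars) ∧ x ∉ F.vars) :
    ∃ p : Tm, (∀ v ∈ p.vars, v ∈ xs ∨ v ∈ B.map Prod.fst) ∧
      LDerivCtx false
        ((xs.zip A).map (fun xA => LForm.pf (Tm.var xA.1) xA.2) ++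
          B.map (fun yb => LForm.pf (Tm.var yb.1) yb.2))
        (LForm.pf p F) :=
  lpv_minus_internalization_general A B F h xs hlen
end

section
/- In LPV⁻ (and LPV) constructive necessitation holds: if ⊢ F then ⊢ t:F for some ground proof term t (a term containing no proof variables). Consequently V-necessitation is derivable: if ⊢ F then ⊢ VF. -/
/-- In LPV⁻ and LPV constructive necessitation holds: if ⊢ F then
⊢ t:F for some ground proof term t; consequently V-necessitation is derivable. -/
theorem lpv_constructive_necessitation (strong : Bool) (F : LForm)
    (h : LDeriv strong F) :
    (∃ t : Tm, t.ground ∧ LDeriv strong (LForm.pf t F)) ∧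
      LDeriv strong (LForm.V F) := by
  have main : ∃ t : Tm, t.ground ∧ LDeriv strong (LForm.pf t F) := by
    induction h with
    | hyp hA => simp at hA
    | ax hA => exact ⟨Tm.const 0, trivial, LDerivCtx.nec 0 hA⟩
    | mp h1 h2 ih1 ih2 =>
      obtain ⟨t, ht, dt⟩ := ih1
      obtain ⟨s, hs, ds⟩ := ih2
      exact ⟨t.app s, ⟨ht, hs⟩,
        LDerivCtx.mp (LDerivCtx.mp (LDerivCtx.ax (LAxiom.appAx t s _ _)) dt) ds⟩
    | nec c hA =>
      exact ⟨(Tm.const c).bang, trivial,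
        LDerivCtx.mp (LDerivCtx.ax (LAxiom.checkAx (Tm.const c) _)) (LDerivCtx.nec c hA)⟩
  refine ⟨main, ?_⟩
  obtain ⟨t, _, dt⟩ := main
  exact LDerivCtx.mp (LDerivCtx.ax (LAxiom.pfV t F)) dt
end

section
/- Arithmetical soundness of LPV⁻: for any constant specification CS and any CS-interpretation * mapping proof terms to numbers via a normal proof predicate Prf (with recursive functions m, a, c witnessing application, sum, and proof checking), propositional letters to PA-sentences, t:F to Prf(t*,F*), and VF to Ver(F*) where Ver is a provably Σ formula satisfying PA ⊢ Ver(F→G)→(Ver(F)→Ver(G)) and PA ⊢ Prf(n,F)→Ver(F) for each n, every theorem F of LPV⁻-CS satisfies PA ⊢ F*. -/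
/-- An abstract presentation of Peano Arithmetic: sentences, provability,
truth in the standard model, and enough propositional structure. -/
structure PASystem where
  Sent : Type
  /-- PA ⊢ F -/
  Prov : Sent → Prop
  /-- truth in the standard model -/
  TrueIn : Sent → Prop
  imp : Sent → Sent → Sent
  and : Sent → Sent → Sent
  or : Sent → Sent → Sent
  bot : Sent
  mp : ∀ {F G : Sent}, Prov (imp F G) → Prov F → Prov G
  a1 : ∀ F G : Sent, Prov (imp F (imp G F))
  a2 : ∀ F G H : Sent, Prov (imp (imp F (imp G H)) (imp (imp F G) (imp F H)))
  andI : ∀ F G : Sent, Prov (imp F (imp G (and F G)))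
  andE1 : ∀ F G : Sent, Prov (imp (and F G) F)
  andE2 : ∀ F G : Sent, Prov (imp (and F G) G)
  orI1 : ∀ F G : Sent, Prov (imp F (or F G))
  orI2 : ∀ F G : Sent, Prov (imp G (or F G))
  orE : ∀ F G H : Sent, Prov (imp (imp F H) (imp (imp G H) (imp (or F G) H)))
  exfalso : ∀ F : Sent, Prov (imp bot F)
  dne : ∀ F : Sent, Prov (imp (imp (imp F bot) bot) F)
  sound : ∀ F : Sent, Prov F → TrueIn F

def PASystem.neg (PA : PASystem) (F : PA.Sent) : PA.Sent := PA.imp F PA.bot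

/-- A normal proof predicate Prf(x,y) for `PA`, with the recursive functions
m, a, c of Theorem `prffunctions` witnessing application, sum and proof checking. -/
structure NormalPrf (PA : PASystem) where
  /-- the arithmetical formula Prf(n, F) -/
  PrfSen : ℕ → PA.Sent → PA.Sent
  /-- Prf(n, F) holds (is true in the standard model) -/
  PrfTrue : ℕ → PA.Sent → Prop
  prfTrue_iff : ∀ (n : ℕ) (F : PA.Sent), PrfTrue n F ↔ PA.TrueIn (PrfSen n F)
  /-- Prf is provably Δ: positive instances are provable … -/
  complete_pos : ∀ (n : ℕ) (F : PA.Sent), PrfTrue n F → PA.Prov (PrfSen n F)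
  /-- … and false instances are refutable. -/
  complete_neg : ∀ (n : ℕ) (F : PA.Sent), ¬ PrfTrue n F → PA.Prov (PA.neg (PrfSen n F))
  /-- PA ⊢ F iff Prf(n, F) for some n -/
  prov_iff : ∀ F : PA.Sent, PA.Prov F ↔ ∃ n : ℕ, PrfTrue n F
  /-- each proof proves only finitely many theorems -/
  finite : ∀ k : ℕ, {F : PA.Sent | PrfTrue k F}.Finite
  /-- proofs can be joined into longer proofs -/
  join : ∀ k l : ℕ, ∃ n : ℕ, ∀ F : PA.Sent, PrfTrue k F ∨ PrfTrue l F → PrfTrue n F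
  mFun : ℕ → ℕ → ℕ
  aFun : ℕ → ℕ → ℕ
  cFun : ℕ → ℕ
  mSpec : ∀ (k n : ℕ) (F G : PA.Sent),
    PA.Prov (PA.imp (PA.and (PrfSen k (PA.imp F G)) (PrfSen n F)) (PrfSen (mFun k n) G))
  aSpec1 : ∀ (k n : ℕ) (F : PA.Sent), PA.Prov (PA.imp (PrfSen k F) (PrfSen (aFun k n) F))
  aSpec2 : ∀ (k n : ℕ) (F : PA.Sent), PA.Prov (PA.imp (PrfSen n F) (PrfSen (aFun k n) F))
  cSpec : ∀ (k : ℕ) (F : PA.Sent), PA.Prov (PA.imp (PrfSen k F) (PrfSen (cFun k) (PrfSen k F)))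

/-- A verification predicate for LPV⁻ (Definition `ver`). -/
structure VerPred (PA : PASystem) (P : NormalPrf PA) where
  /-- the arithmetical formula Ver(F) -/
  VerSen : PA.Sent → PA.Sent
  verK : ∀ F G : PA.Sent,
    PA.Prov (PA.imp (VerSen (PA.imp F G)) (PA.imp (VerSen F) (VerSen G)))
  prf_ver : ∀ (n : ℕ) (F : PA.Sent), PA.Prov (PA.imp (P.PrfSen n F) (VerSen F))

/-- Interpretation of proof terms as natural numbers. -/
def Tm.star {PA : PASystem} (P : NormalPrf PA) (evar econst : ℕ → ℕ) : Tm → ℕ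
  | .var x => evar x
  | .const c => econst c
  | .app t s => P.mFun (t.star P evar econst) (s.star P evar econst)
  | .sum t s => P.aFun (t.star P evar econst) (s.star P evar econst)
  | .bang t => P.cFun (t.star P evar econst)

/-- The arithmetical interpretation * of LPV⁻/LPV formulas. -/
def LForm.star {PA : PASystem} (P : NormalPrf PA) (Ver : PA.Sent → PA.Sent)
    (v : ℕ → PA.Sent) (evar econst : ℕ → ℕ) : LForm → PA.Sent
  | .atom n => v n
  | .bot => PA.bot
  | .and A B => PA.and (A.star P Ver v evar econst) (B.star P Ver v evar econst)
  | .or A B => PA.or (A.star P Ver v evar econst) (B.star P Ver v evar econst)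
  | .imp A B => PA.imp (A.star P Ver v evar econst) (B.star P Ver v evar econst)
  | .V A => Ver (A.star P Ver v evar econst)
  | .pf t A => P.PrfSen (t.star P evar econst) (A.star P Ver v evar econst)

/-- Derivability in LPV⁻-CS / LPV-CS: the necessitation rule is replaced by the
members of the constant specification CS as additional axioms. -/
inductive LDerivCS (strong : Bool) (CS : Set (ℕ × LForm)) : LForm → Prop
  | ax {A : LForm} : LAxiom strong A → LDerivCS strong CS A
  | cs {c : ℕ} {A : LForm} : (c, A) ∈ CS → LDerivCS strong CS (LForm.pf (Tm.const c) A)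
  | mp {A B : LForm} : LDerivCS strong CS (A.imp B) → LDerivCS strong CS A →
      LDerivCS strong CS B

namespace PASystem

variable {PA : PASystem}

theorem lift {F G : PA.Sent} (h : PA.Prov G) : PA.Prov (PA.imp F G) :=
  PA.mp (PA.a1 G F) h

theorem ptrans {F G H : PA.Sent} (h1 : PA.Prov (PA.imp F G))
    (h2 : PA.Prov (PA.imp G H)) : PA.Prov (PA.imp F H) :=
  PA.mp (PA.mp (PA.a2 F G H) (lift h2)) h1

/-- From A→(B→C) and C→D get A→(B→D). -/
theorem comp2 {A B C D : PA.Sent} (h1 : PA.Prov (PA.imp A (PA.imp B C)))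
    (h2 : PA.Prov (PA.imp C D)) : PA.Prov (PA.imp A (PA.imp B D)) := by
  have hcd : PA.Prov (PA.imp A (PA.imp B (PA.imp C D))) := lift (lift h2)
  have ha2 : PA.Prov (PA.imp A (PA.imp (PA.imp B (PA.imp C D))
      (PA.imp (PA.imp B C) (PA.imp B D)))) := lift (PA.a2 B C D)
  have h3 : PA.Prov (PA.imp A (PA.imp (PA.imp B C) (PA.imp B D))) :=
    PA.mp (PA.mp (PA.a2 A (PA.imp B (PA.imp C D)) _) ha2) hcd
  exact PA.mp (PA.mp (PA.a2 A (PA.imp B C) (PA.imp B D)) h3) h1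

theorem curry {F G H : PA.Sent} (h : PA.Prov (PA.imp (PA.and F G) H)) :
    PA.Prov (PA.imp F (PA.imp G H)) :=
  comp2 (PA.andI F G) h

end PASystem

theorem laxiom_sound (PA : PASystem) (P : NormalPrf PA)
    (Ver : VerPred PA P) (v : ℕ → PA.Sent) (evar econst : ℕ → ℕ)
    {A : LForm} (h : LAxiom false A) :
    PA.Prov (LForm.star P Ver.VerSen v evar econst A) := by
  induction h with
  | a1 A B => exact PA.a1 _ _
  | a2 A B C => exact PA.a2 _ _ _
  | andI A B => exact PA.andI _ _
  | andE1 A B => exact PA.andE1 _ _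
  | andE2 A B => exact PA.andE2 _ _
  | orI1 A B => exact PA.orI1 _ _
  | orI2 A B => exact PA.orI2 _ _
  | orE A B C => exact PA.orE _ _ _
  | exfalso A => exact PA.exfalso _
  | dne A => exact PA.dne _
  | appAx t s A B => exact PASystem.curry (P.mSpec _ _ _ _)
  | reflAx t A =>
      by_cases hk : P.PrfTrue (t.star P evar econst)
          (LForm.star P Ver.VerSen v evar econst A)
      · exact PASystem.lift ((P.prov_iff _).mpr ⟨_, hk⟩)
      · exact PASystem.ptrans (P.complete_neg _ _ hk) (PA.exfalso _)
  | checkAx t A => exact P.cSpec _ _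
  | sum1 t s A => exact P.aSpec2 _ _ _
  | sum2 t s A => exact P.aSpec1 _ _ _
  | vK A B => exact Ver.verK _ _
  | pfV t A => exact Ver.prf_ver _ _
  | consis t hs => exact absurd hs (by simp)

/-- Arithmetical soundness of LPV⁻: for any constant
specification CS and any CS-interpretation * (built from a normal proof
predicate and a verification predicate), every theorem F of LPV⁻-CS satisfies
PA ⊢ F*. -/
theorem lpv_minus_arithmetical_soundness (PA : PASystem) (P : NormalPrf PA)
    (Ver : VerPred PA P) (v : ℕ → PA.Sent) (evar econst : ℕ → ℕ)
    (CS : Set (ℕ × LForm)) (hCS : ∀ p ∈ CS, LAxiom false p.2)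
    (hCSint : ∀ p ∈ CS,
      P.PrfTrue (econst p.1) (LForm.star P Ver.VerSen v evar econst p.2))
    (F : LForm) (h : LDerivCS false CS F) :
    PA.Prov (LForm.star P Ver.VerSen v evar econst F) := by
  induction h with
  | ax hA => exact laxiom_sound PA P Ver v evar econst hA
  | cs hc => exact P.complete_pos _ _ (hCSint _ hc)
  | mp _ _ ih1 ih2 => exact PA.mp ih1 ih2
end

section
/- Arithmetical soundness of LPV: with the additional requirement on the verification predicate that PA ⊢ ¬Prf(n, Ver(⊥)) for every n, every theorem F of LPV-CS satisfies PA ⊢ F* under any such CS-interpretation. -/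
lemma PASystem.syl (PA : PASystem) {F G H : PA.Sent}
    (h1 : PA.Prov (PA.imp F G)) (h2 : PA.Prov (PA.imp G H)) :
    PA.Prov (PA.imp F H) :=
  PA.mp (PA.mp (PA.a2 F G H) (PA.mp (PA.a1 _ F) h2)) h1

lemma PASystem.monoL (PA : PASystem) {G H : PA.Sent} (F : PA.Sent)
    (h : PA.Prov (PA.imp G H)) : PA.Prov (PA.imp (PA.imp F G) (PA.imp F H)) :=
  PA.mp (PA.a2 F G H) (PA.mp (PA.a1 _ _) h)

lemma PASystem.curry_s14 (PA : PASystem) {A B C : PA.Sent}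
    (h : PA.Prov (PA.imp (PA.and A B) C)) :
    PA.Prov (PA.imp A (PA.imp B C)) :=
  PA.syl (PA.andI A B) (PA.monoL B h)

lemma lpv_axiom_sound (PA : PASystem) (P : NormalPrf PA) (Ver : VerPred PA P)
    (hVerCons : ∀ n : ℕ, PA.Prov (PA.neg (P.PrfSen n (Ver.VerSen PA.bot))))
    (v : ℕ → PA.Sent) (evar econst : ℕ → ℕ)
    {A : LForm} (h : LAxiom true A) :
    PA.Prov (LForm.star P Ver.VerSen v evar econst A) := by
  induction h with
  | a1 A B => exact PA.a1 _ _
  | a2 A B C => exact PA.a2 _ _ _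
  | andI A B => exact PA.andI _ _
  | andE1 A B => exact PA.andE1 _ _
  | andE2 A B => exact PA.andE2 _ _
  | orI1 A B => exact PA.orI1 _ _
  | orI2 A B => exact PA.orI2 _ _
  | orE A B C => exact PA.orE _ _ _
  | exfalso A => exact PA.exfalso _
  | dne A => exact PA.dne _
  | appAx t s A B => exact PA.curry_s14 (P.mSpec _ _ _ _)
  | reflAx t A =>
      by_cases hp : P.PrfTrue (t.star P evar econst)
          (A.star P Ver.VerSen v evar econst)
      · exact PA.mp (PA.a1 _ _) ((P.prov_iff _).mpr ⟨_, hp⟩)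
      · exact PA.syl (P.complete_neg _ _ hp) (PA.exfalso _)
  | checkAx t A => exact P.cSpec _ _
  | sum1 t s A => exact P.aSpec2 _ _ _
  | sum2 t s A => exact P.aSpec1 _ _ _
  | vK A B => exact Ver.verK _ _
  | pfV t A => exact Ver.prf_ver _ _
  | consis t _ => exact hVerCons _

/-- Arithmetical soundness of LPV: if the verification predicate
additionally satisfies PA ⊢ ¬Prf(n, Ver(⊥)) for every n, then every theorem F
of LPV-CS satisfies PA ⊢ F* under any such CS-interpretation. -/
theorem lpv_arithmetical_soundness (PA : PASystem) (P : NormalPrf PA)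
    (Ver : VerPred PA P)
    (hVerCons : ∀ n : ℕ, PA.Prov (PA.neg (P.PrfSen n (Ver.VerSen PA.bot))))
    (v : ℕ → PA.Sent) (evar econst : ℕ → ℕ)
    (CS : Set (ℕ × LForm)) (hCS : ∀ p ∈ CS, LAxiom true p.2)
    (hCSint : ∀ p ∈ CS,
      P.PrfTrue (econst p.1) (LForm.star P Ver.VerSen v evar econst p.2))
    (F : LForm) (h : LDerivCS true CS F) :
    PA.Prov (LForm.star P Ver.VerSen v evar econst F) := by
  induction h with
  | ax hA => exact lpv_axiom_sound PA P Ver hVerCons v evar econst hA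
  | cs hc => exact P.complete_pos _ _ (hCSint _ hc)
  | mp _ _ ih1 ih2 => exact PA.mp ih1 ih2
end

section
/- Taking Ver(x) = Bew(Con(PA)→x), i.e. provability in PA + Con(PA), yields a verification predicate in the sense of LPV: it satisfies closure under modus ponens internally, is implied by Prf, and PA proves ¬Prf(n, Ver(⊥)) for each n (since Ver(⊥) = Bew(¬Con(PA)) is false in the standard model and hence unprovable in PA). -/
/-- Ver(x) = Bew(Con(PA) → x), provability in PA + Con(PA), is a
verification predicate in the sense of LPV: it is internally closed under modus
ponens, provably implied by Prf, and PA ⊢ ¬Prf(n, Ver(⊥)) for each n, provided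
Bew(¬Con(PA)) is unprovable in PA. -/
theorem ver_as_provability_in_PA_plus_Con (PA : PASystem) (P : NormalPrf PA)
    (Bew : PA.Sent → PA.Sent)
    (hBewK : ∀ F G : PA.Sent,
      PA.Prov (PA.imp (Bew (PA.imp F G)) (PA.imp (Bew F) (Bew G))))
    (hBewNec : ∀ F : PA.Sent, PA.Prov F → PA.Prov (Bew F))
    (hPrfBew : ∀ (n : ℕ) (F : PA.Sent), PA.Prov (PA.imp (P.PrfSen n F) (Bew F)))
    (Con : PA.Sent) (hCon : Con = PA.neg (Bew PA.bot))
    (hUnprov : ¬ PA.Prov (Bew (PA.neg Con))) :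
    let Ver : PA.Sent → PA.Sent := fun x => Bew (PA.imp Con x)
    (∀ F G : PA.Sent,
      PA.Prov (PA.imp (Ver (PA.imp F G)) (PA.imp (Ver F) (Ver G)))) ∧
    (∀ (n : ℕ) (F : PA.Sent), PA.Prov (PA.imp (P.PrfSen n F) (Ver F))) ∧
    (∀ n : ℕ, PA.Prov (PA.neg (P.PrfSen n (Ver PA.bot)))) := by
  intro Ver
  have comp : ∀ {A B C : PA.Sent}, PA.Prov (PA.imp A B) → PA.Prov (PA.imp B C) →
      PA.Prov (PA.imp A C) := by
    intro A B C hAB hBC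
    have h1 : PA.Prov (PA.imp A (PA.imp B C)) := PA.mp (PA.a1 _ _) hBC
    exact PA.mp (PA.mp (PA.a2 A B C) h1) hAB
  refine ⟨?_, ?_, ?_⟩
  · intro F G
    have t1 : PA.Prov (PA.imp (Bew (PA.imp Con (PA.imp F G)))
        (Bew (PA.imp (PA.imp Con F) (PA.imp Con G)))) :=
      PA.mp (hBewK _ _) (hBewNec _ (PA.a2 Con F G))
    exact comp t1 (hBewK _ _)
  · intro n F
    have t1 : PA.Prov (PA.imp (Bew F) (Bew (PA.imp Con F))) :=
      PA.mp (hBewK _ _) (hBewNec _ (PA.a1 F Con))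
    exact comp (hPrfBew n F) t1
  · intro n
    apply P.complete_neg
    intro hT
    exact hUnprov ((P.prov_iff _).mpr ⟨n, hT⟩)
end

section
/- Forgetful projection: if LPV⁻ ⊢ F then S4V⁻ ⊢ F⁰, and if LPV ⊢ F then S4V ⊢ F⁰, where F⁰ is the result of replacing every proof term occurrence t: in F by □. -/
/-- The forgetful projection: replace every proof term by □. -/
def LForm.proj : LForm → MForm
  | .atom n => MForm.atom n
  | .bot => MForm.bot
  | .and A B => A.proj.and B.proj
  | .or A B => A.proj.or B.proj
  | .imp A B => A.proj.imp B.proj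
  | .V A => MForm.V A.proj
  | .pf _ A => A.proj.box

lemma S4V_id (strong : Bool) (A : MForm) : S4VDeriv strong (A.imp A) :=
  (S4VDeriv.a2 A (A.imp A) A).mp (S4VDeriv.a1 A (A.imp A)) |>.mp (S4VDeriv.a1 A A)

lemma LAxiom_proj {strong : Bool} {A : LForm} (h : LAxiom strong A) :
    S4VDeriv strong A.proj := by
  cases h with
  | a1 A B => exact S4VDeriv.a1 _ _
  | a2 A B C => exact S4VDeriv.a2 _ _ _
  | andI A B => exact S4VDeriv.andI _ _
  | andE1 A B => exact S4VDeriv.andE1 _ _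
  | andE2 A B => exact S4VDeriv.andE2 _ _
  | orI1 A B => exact S4VDeriv.orI1 _ _
  | orI2 A B => exact S4VDeriv.orI2 _ _
  | orE A B C => exact S4VDeriv.orE _ _ _
  | exfalso A => exact S4VDeriv.exfalso _
  | dne A => exact S4VDeriv.dne _
  | appAx t s A B => exact S4VDeriv.boxK _ _
  | reflAx t A => exact S4VDeriv.boxT _
  | checkAx t A => exact S4VDeriv.box4 _
  | sum1 t s A => exact S4V_id _ _
  | sum2 t s A => exact S4V_id _ _
  | vK A B => exact S4VDeriv.vK _ _
  | pfV t A => exact S4VDeriv.boxV _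
  | consis t hs => exact S4VDeriv.consis hs

/-- Forgetful projection: if LPV⁻ ⊢ F then S4V⁻ ⊢ F⁰ and if
LPV ⊢ F then S4V ⊢ F⁰, where F⁰ replaces every proof term by □. -/
theorem forgetful_projection (strong : Bool) (F : LForm) (h : LDeriv strong F) :
    S4VDeriv strong F.proj := by
  induction h with
  | hyp h => simp at h
  | ax h => exact LAxiom_proj h
  | mp _ _ ih1 ih2 => exact ih1.mp ih2
  | nec c h => exact (LAxiom_proj h).nec
end

section
/- In the sequent calculus S4Vg (with the □-rules of S4, the V-rule □Θ,Γ⇒X / □Θ,VΓ⇒VX, the interaction rule Γ,VX⇒Δ / Γ,□X⇒Δ, and the weak inconsistency elimination rule Γ⇒□V⊥ / Γ⇒), every derivable sequent Γ⇒Δ corresponds to a Hilbert-style S4V theorem ⋀Γ→⋁Δ (soundness of the sequent system with respect to S4V). -/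
/-- The sequent calculus S4Vg: G1c with the modal rules of S4, the V-rule,
the interaction rule, and weak inconsistency elimination. -/
inductive SDeriv : List MForm → List MForm → Prop
  | ax (n : ℕ) : SDeriv [MForm.atom n] [MForm.atom n]
  | botL : SDeriv [MForm.bot] []
  | perm {Γ Γ' Δ Δ' : List MForm} : Γ.Perm Γ' → Δ.Perm Δ' → SDeriv Γ Δ → SDeriv Γ' Δ'
  | wkL {Γ Δ : List MForm} (A : MForm) : SDeriv Γ Δ → SDeriv (A :: Γ) Δ
  | wkR {Γ Δ : List MForm} (A : MForm) : SDeriv Γ Δ → SDeriv Γ (A :: Δ)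
  | ctrL {Γ Δ : List MForm} {A : MForm} : SDeriv (A :: A :: Γ) Δ → SDeriv (A :: Γ) Δ
  | ctrR {Γ Δ : List MForm} {A : MForm} : SDeriv Γ (A :: A :: Δ) → SDeriv Γ (A :: Δ)
  | andL1 {Γ Δ : List MForm} {A : MForm} (B : MForm) :
      SDeriv (A :: Γ) Δ → SDeriv (A.and B :: Γ) Δ
  | andL2 {Γ Δ : List MForm} (A : MForm) {B : MForm} :
      SDeriv (B :: Γ) Δ → SDeriv (A.and B :: Γ) Δ
  | andR {Γ Δ : List MForm} {A B : MForm} :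
      SDeriv Γ (A :: Δ) → SDeriv Γ (B :: Δ) → SDeriv Γ (A.and B :: Δ)
  | orL {Γ Δ : List MForm} {A B : MForm} :
      SDeriv (A :: Γ) Δ → SDeriv (B :: Γ) Δ → SDeriv (A.or B :: Γ) Δ
  | orR1 {Γ Δ : List MForm} {A : MForm} (B : MForm) :
      SDeriv Γ (A :: Δ) → SDeriv Γ (A.or B :: Δ)
  | orR2 {Γ Δ : List MForm} (A : MForm) {B : MForm} :
      SDeriv Γ (B :: Δ) → SDeriv Γ (A.or B :: Δ)
  | impL {Γ Δ : List MForm} {A B : MForm} :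
      SDeriv Γ (A :: Δ) → SDeriv (B :: Γ) Δ → SDeriv (A.imp B :: Γ) Δ
  | impR {Γ Δ : List MForm} {A B : MForm} :
      SDeriv (A :: Γ) (B :: Δ) → SDeriv Γ (A.imp B :: Δ)
  | boxL {Γ Δ : List MForm} {A : MForm} : SDeriv (A :: Γ) Δ → SDeriv (A.box :: Γ) Δ
  | boxR {Γ : List MForm} {A : MForm} :
      SDeriv (Γ.map MForm.box) [A] → SDeriv (Γ.map MForm.box) [A.box]
  | vR {Θ Γ : List MForm} {A : MForm} :
      SDeriv (Θ.map MForm.box ++ Γ) [A] →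
      SDeriv (Θ.map MForm.box ++ Γ.map MForm.V) [MForm.V A]
  | interL {Γ Δ : List MForm} {A : MForm} :
      SDeriv (MForm.V A :: Γ) Δ → SDeriv (A.box :: Γ) Δ
  | wie {Γ : List MForm} : SDeriv Γ [(MForm.V MForm.bot).box] → SDeriv Γ []

/-- Conjunction of a list of formulas (empty list: ⊤ = ⊥→⊥). -/
def mconj (Γ : List MForm) : MForm := Γ.foldr MForm.and (MForm.bot.imp MForm.bot)

/-- Disjunction of a list of formulas (empty list: ⊥). -/
def mdisj (Δ : List MForm) : MForm := Δ.foldr MForm.or MForm.bot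


/-! A sequent `Γ ⇒ Δ` is read as `Γ ⊢ ⋁Δ` in the Hilbert calculus with hypotheses, in which
necessitation applies only to theorems, so that the deduction theorem holds. Every propositional
rule of S4Vg is then an admissible step of this calculus. For the modal rules, a derivation
`Γ ⊢ A` maps to derivations `□Γ ⊢ □A` and `VΓ ⊢ VA` (by `K` and necessitation for each
modality), and the hypotheses `□□B` and `V□B` this produces from a boxed `□B` follow from it by
axiom 4 and `□C → VC`.
Weak inconsistency elimination is the axiom `¬□V⊥`. -/

namespace S4VDeriv

variable {s : Bool} {A B C : MForm}

theorem imp_self (A : MForm) : S4VDeriv s (A.imp A) :=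
  mp (mp (a2 A (A.imp A) A) (a1 A (A.imp A))) (a1 A A)

theorem imp_trans (hAB : S4VDeriv s (A.imp B)) (hBC : S4VDeriv s (B.imp C)) :
    S4VDeriv s (A.imp C) :=
  mp (mp (a2 A B C) (mp (a1 _ A) hBC)) hAB

theorem necV (h : S4VDeriv s A) : S4VDeriv s (MForm.V A) :=
  mp (boxV A) (nec h)

end S4VDeriv

inductive S4VEntails (s : Bool) (Γ : List MForm) : MForm → Prop
  | hyp {A : MForm} : A ∈ Γ → S4VEntails s Γ A
  | thm {A : MForm} : S4VDeriv s A → S4VEntails s Γ A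
  | mp {A B : MForm} : S4VEntails s Γ (A.imp B) → S4VEntails s Γ A → S4VEntails s Γ B

namespace S4VEntails

variable {s : Bool} {Γ Γ' : List MForm} {A B C D : MForm}

theorem head : S4VEntails s (A :: Γ) A :=
  hyp List.mem_cons_self

theorem of_imp (hAB : S4VDeriv s (A.imp B)) (hA : S4VEntails s Γ A) : S4VEntails s Γ B :=
  mp (thm hAB) hA

theorem of_forall_entails (h : S4VEntails s Γ A) (hΓ : ∀ B ∈ Γ, S4VEntails s Γ' B) :
    S4VEntails s Γ' A := by
  induction h with
  | hyp hA => exact hΓ _ hA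
  | thm hA => exact thm hA
  | mp _ _ ihAB ihA => exact mp ihAB ihA

theorem mono (h : S4VEntails s Γ A) (hΓ : Γ ⊆ Γ') : S4VEntails s Γ' A :=
  h.of_forall_entails fun _ hB => hyp (hΓ hB)

theorem weaken (h : S4VEntails s Γ A) : S4VEntails s (B :: Γ) A :=
  h.mono (List.subset_cons_self _ _)

theorem cut (h : S4VEntails s (A :: Γ) C) (hA : S4VEntails s Γ' A) (hΓ : Γ ⊆ Γ') :
    S4VEntails s Γ' C :=
  h.of_forall_entails <| List.forall_mem_cons.2 ⟨hA, fun _ hX => hyp (hΓ hX)⟩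

theorem of_cons_of_imp (h : S4VEntails s (A :: Γ) C) (hBA : S4VDeriv s (B.imp A)) :
    S4VEntails s (B :: Γ) C :=
  h.cut (of_imp hBA head) (List.subset_cons_self _ _)

theorem deduction (h : S4VEntails s (A :: Γ) B) : S4VEntails s Γ (A.imp B) := by
  induction h with
  | hyp hB =>
    rcases List.mem_cons.1 hB with rfl | hB
    · exact thm (S4VDeriv.imp_self _)
    · exact of_imp (S4VDeriv.a1 _ _) (hyp hB)
  | thm hB => exact of_imp (S4VDeriv.a1 _ _) (thm hB)
  | mp _ _ ihBC ihB => exact mp (of_imp (S4VDeriv.a2 _ _ _) ihBC) ihB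

theorem close (h : S4VEntails s [] A) : S4VDeriv s A := by
  induction h with
  | hyp hA => cases hA
  | thm hA => exact hA
  | mp _ _ ihAB ihA => exact S4VDeriv.mp ihAB ihA

theorem and_intro (hA : S4VEntails s Γ A) (hB : S4VEntails s Γ B) :
    S4VEntails s Γ (A.and B) :=
  mp (of_imp (S4VDeriv.andI A B) hA) hB

theorem or_elim (h : S4VEntails s Γ (A.or B)) (hA : S4VEntails s (A :: Γ) C)
    (hB : S4VEntails s (B :: Γ) C) : S4VEntails s Γ C :=
  mp (mp (of_imp (S4VDeriv.orE A B C) hA.deduction) hB.deduction) h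

theorem or_map_left (h : S4VEntails s Γ (A.or D)) (hAB : S4VEntails s (A :: Γ) B) :
    S4VEntails s Γ (B.or D) :=
  h.or_elim (of_imp (S4VDeriv.orI1 _ _) hAB) (of_imp (S4VDeriv.orI2 _ _) head)

theorem map_box (h : S4VEntails s Γ A) : S4VEntails s (Γ.map MForm.box) A.box := by
  induction h with
  | hyp hA => exact hyp (List.mem_map_of_mem hA)
  | thm hA => exact thm (S4VDeriv.nec hA)
  | mp _ _ ihAB ihA => exact mp (of_imp (S4VDeriv.boxK _ _) ihAB) ihA

theorem map_V (h : S4VEntails s Γ A) : S4VEntails s (Γ.map MForm.V) (MForm.V A) := by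
  induction h with
  | hyp hA => exact hyp (List.mem_map_of_mem hA)
  | thm hA => exact thm (S4VDeriv.necV hA)
  | mp _ _ ihAB ihA => exact mp (of_imp (S4VDeriv.vK _ _) ihAB) ihA

theorem box_of_boxed {Γ : List MForm} (h : S4VEntails s (Γ.map MForm.box) A) :
    S4VEntails s (Γ.map MForm.box) A.box := by
  refine h.map_box.of_forall_entails ?_
  simp only [List.map_map, List.forall_mem_map]
  exact fun B hB => of_imp (S4VDeriv.box4 B) (hyp (List.mem_map_of_mem hB))

theorem V_of_boxed_append {Θ Γ : List MForm} (h : S4VEntails s (Θ.map MForm.box ++ Γ) A) :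
    S4VEntails s (Θ.map MForm.box ++ Γ.map MForm.V) (MForm.V A) := by
  refine h.map_V.of_forall_entails ?_
  simp only [List.map_append, List.map_map, List.forall_mem_append, List.forall_mem_map]
  refine ⟨fun B hB => ?_, fun B hB => hyp (List.mem_append_right _ (List.mem_map_of_mem hB))⟩
  have hBox : S4VEntails s (Θ.map MForm.box ++ Γ.map MForm.V) B.box :=
    hyp (List.mem_append_left _ (List.mem_map_of_mem hB))
  exact of_imp (S4VDeriv.boxV _) (of_imp (S4VDeriv.box4 B) hBox)

end S4VEntails

open S4VEntails

theorem S4VDeriv.em {s : Bool} (A : MForm) : S4VDeriv s (A.or A.neg) := by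
  have hNotA : S4VEntails s [(A.or A.neg).neg] A.neg :=
    deduction (S4VEntails.mp head.weaken (of_imp (S4VDeriv.orI1 _ _) head))
  have hBot : S4VEntails s [(A.or A.neg).neg] MForm.bot :=
    S4VEntails.mp head (of_imp (S4VDeriv.orI2 _ _) hNotA)
  exact S4VDeriv.mp (S4VDeriv.dne _) hBot.deduction.close

section Lists

variable {s : Bool} {Γ Δ Δ' : List MForm} {A C : MForm}

theorem S4VDeriv.imp_mdisj_of_mem (h : A ∈ Δ) : S4VDeriv s (A.imp (mdisj Δ)) := by
  induction Δ with
  | nil => cases h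
  | cons B Δ ih =>
    rcases List.mem_cons.1 h with rfl | h
    · exact S4VDeriv.orI1 _ _
    · exact S4VDeriv.imp_trans (ih h) (S4VDeriv.orI2 _ _)

theorem S4VDeriv.mdisj_imp_of_forall (h : ∀ A ∈ Δ, S4VDeriv s (A.imp C)) :
    S4VDeriv s ((mdisj Δ).imp C) := by
  induction Δ with
  | nil => exact S4VDeriv.exfalso C
  | cons B Δ ih =>
    rw [List.forall_mem_cons] at h
    exact S4VDeriv.mp (S4VDeriv.mp (S4VDeriv.orE B (mdisj Δ) C) h.1) (ih h.2)

theorem S4VDeriv.mconj_imp_of_mem (h : A ∈ Γ) : S4VDeriv s ((mconj Γ).imp A) := by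
  induction Γ with
  | nil => cases h
  | cons B Γ ih =>
    rcases List.mem_cons.1 h with rfl | h
    · exact S4VDeriv.andE1 _ _
    · exact S4VDeriv.imp_trans (S4VDeriv.andE2 _ _) (ih h)

theorem S4VEntails.mdisj_mono (h : S4VEntails s Γ (mdisj Δ)) (hΔ : Δ ⊆ Δ') :
    S4VEntails s Γ (mdisj Δ') :=
  of_imp (S4VDeriv.mdisj_imp_of_forall fun _ hA => S4VDeriv.imp_mdisj_of_mem (hΔ hA)) h

theorem S4VEntails.mdisj_singleton (h : S4VEntails s Γ A) : S4VEntails s Γ (mdisj [A]) :=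
  of_imp (S4VDeriv.orI1 _ _) h

theorem S4VEntails.of_mdisj_singleton (h : S4VEntails s Γ (mdisj [A])) : S4VEntails s Γ A :=
  h.or_elim head (of_imp (S4VDeriv.exfalso A) head)

theorem S4VEntails.imp_or_of_cons {B D : MForm} (h : S4VEntails s (A :: Γ) (B.or D)) :
    S4VEntails s Γ ((A.imp B).or D) :=
  (thm (S4VDeriv.em A)).or_elim (h.or_map_left (of_imp (S4VDeriv.a1 B A) head))
    (of_imp (S4VDeriv.orI1 _ _) (deduction (of_imp (S4VDeriv.exfalso B) (mp head.weaken head))))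

theorem S4VEntails.mconj_imp (h : S4VEntails s Γ A) : S4VDeriv s ((mconj Γ).imp A) :=
  (h.of_forall_entails fun _ hB => of_imp (S4VDeriv.mconj_imp_of_mem hB) head).deduction.close

end Lists

theorem SDeriv.entails_mdisj {Γ Δ : List MForm} (h : SDeriv Γ Δ) :
    S4VEntails true Γ (mdisj Δ) := by
  induction h with
  | ax _ => exact head.mdisj_singleton
  | botL => exact head
  | perm hΓ hΔ _ ih => exact (ih.mono hΓ.subset).mdisj_mono hΔ.subset
  | wkL _ _ ih => exact ih.weaken
  | wkR _ _ ih => exact ih.mdisj_mono (List.subset_cons_self _ _)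
  | ctrL _ ih => exact ih.mono (by simp)
  | ctrR _ ih => exact ih.mdisj_mono (by simp)
  | andL1 _ _ ih => exact ih.of_cons_of_imp (S4VDeriv.andE1 _ _)
  | andL2 _ _ ih => exact ih.of_cons_of_imp (S4VDeriv.andE2 _ _)
  | andR _ _ ih₁ ih₂ =>
    exact ih₁.or_elim (ih₂.weaken.or_map_left (and_intro head.weaken head))
      (of_imp (S4VDeriv.orI2 _ _) head)
  | orL _ _ ih₁ ih₂ =>
    exact head.or_elim (ih₁.mono (List.cons_subset_cons _ (List.subset_cons_self _ _)))
      (ih₂.mono (List.cons_subset_cons _ (List.subset_cons_self _ _)))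
  | orR1 _ _ ih => exact ih.or_map_left (of_imp (S4VDeriv.orI1 _ _) head)
  | orR2 _ _ ih => exact ih.or_map_left (of_imp (S4VDeriv.orI2 _ _) head)
  | impL _ _ ih₁ ih₂ =>
    exact ih₁.weaken.or_elim (ih₂.cut (mp head.weaken head) (by simp)) head
  | impR _ ih => exact ih.imp_or_of_cons
  | boxL _ ih => exact ih.of_cons_of_imp (S4VDeriv.boxT _)
  | boxR _ ih => exact ih.of_mdisj_singleton.box_of_boxed.mdisj_singleton
  | vR _ ih => exact ih.of_mdisj_singleton.V_of_boxed_append.mdisj_singleton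
  | interL _ ih => exact ih.of_cons_of_imp (S4VDeriv.boxV _)
  | wie _ ih => exact of_imp (S4VDeriv.consis rfl) ih.of_mdisj_singleton

/-- Soundness of the sequent calculus S4Vg with respect to the
Hilbert system S4V: every derivable sequent Γ ⇒ Δ yields an S4V theorem
⋀Γ → ⋁Δ. -/
theorem s4vg_soundness (Γ Δ : List MForm) (h : SDeriv Γ Δ) :
    S4VDeriv true ((mconj Γ).imp (mdisj Δ)) :=
  h.entails_mdisj.mconj_imp
end
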